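/- Suppose α > 3. Then the values converge faster than 1/t²: Φ(x(t)) − inf Φ = o(1/t²) as t → +∞, i.e. t²·(Φ(x(t)) − inf Φ) → 0 as t → +∞. -/

import Mathlib

/-!
Along the trajectory consider the Lyapunov energy
`E(t) = t²(Φ(x) - Φ(x⋆)) + ½‖λ(x - x⋆) + t ẋ‖² + ½λ(α - 1 - λ)‖x - x⋆‖²`
with `λ = (α + 1)/2`. By the equation and the convexity inequality
`Φ(x) - Φ(x⋆) ≤ ⟪∇Φ(x), x - x⋆⟫`, `E' ≤ -((α - 3)/2) t (Φ(x) - Φ(x⋆) + ‖ẋ‖²)`,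
so for `α > 3` the dissipation `w(t) = t (Φ(x) - Φ(x⋆) + ‖ẋ‖²)` is integrable on `(t₀, ∞)`.
The scaled energy `G(t) = t² (Φ(x) - Φ(x⋆) + ½‖ẋ‖²)` has
`G' = 2t(Φ(x) - Φ(x⋆)) + (1 - α) t ‖ẋ‖² = O(w)`, so `G` converges; since `G(t)/t ≤ w(t)`
is integrable while `1/t` is not, its limit is `0`.
-/

open Filter Set MeasureTheory Topology
open scoped InnerProductSpace

theorem ConvexOn.add_apply_sub_le_of_hasFDerivAt {E : Type*} [NormedAddCommGroup E]
    [NormedSpace ℝ E] {s : Set E} {f : E → ℝ} {f' : E →L[ℝ] ℝ} {p y : E}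
    (hf : ConvexOn ℝ s f) (hp : p ∈ s) (hy : y ∈ s) (hd : HasFDerivAt f f' p) :
    f p + f' (y - p) ≤ f y := by
  set ℓ : ℝ →ᵃ[ℝ] E := AffineMap.lineMap p y
  have hderiv : HasDerivAt (f ∘ ℓ) (f' (y - p)) 0 :=
    (by simpa [ℓ] using hd : HasFDerivAt f f' (ℓ 0)).comp_hasDerivAt 0
      AffineMap.hasDerivAt_lineMap
  have := (hf.comp_affineMap ℓ).le_slope_of_hasDerivAt (by simpa [ℓ] using hp)
    (by simpa [ℓ] using hy) one_pos hderiv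
  simp only [slope, ℓ, vsub_eq_sub, sub_zero, inv_one, one_smul, Function.comp_apply,
    AffineMap.lineMap_apply_one, AffineMap.lineMap_apply_zero] at this
  linarith

theorem integrableOn_Ioi_of_hasDerivAt_le_neg {E E' w : ℝ → ℝ} {a : ℝ}
    (hE : ContinuousOn E (Ici a)) (hE' : ∀ t ∈ Ioi a, HasDerivAt E (E' t) t)
    (hE_nonneg : ∀ t ∈ Ioi a, 0 ≤ E t) (hw : ContinuousOn w (Ici a))
    (hw_nonneg : ∀ t ∈ Ioi a, 0 ≤ w t) (hle : ∀ t ∈ Ioi a, E' t ≤ -w t) :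
    IntegrableOn w (Ioi a) := by
  refine integrableOn_Ioi_of_intervalIntegral_norm_bounded (E a) a
    (fun b => (hw.mono Icc_subset_Ici_self).integrableOn_Icc.mono_set Ioc_subset_Icc_self)
    tendsto_id ?_
  filter_upwards [eventually_gt_atTop a] with b hb
  have hFTC : ∫ t in a..b, ‖w t‖ ≤ -E b - -E a :=
    intervalIntegral.integral_le_sub_of_hasDeriv_right_of_le hb.le
      (hE.neg.mono Icc_subset_Ici_self)
      (fun t ht => (hE' t ht.1).neg.hasDerivWithinAt)
      (hw.norm.mono Icc_subset_Ici_self).integrableOn_Icc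
      (fun t ht => by
        rw [Real.norm_of_nonneg (hw_nonneg t ht.1)]
        linarith [hle t ht.1])
  simp only [id]
  linarith [hE_nonneg b hb]

theorem Filter.Tendsto.eq_zero_of_integrableOn_div {f : ℝ → ℝ} {a L : ℝ}
    (hf : Tendsto f atTop (𝓝 L)) (hint : IntegrableOn (fun t => f t / t) (Ioi a)) : L = 0 := by
  by_contra hL
  have hL2 : 0 < |L| / 2 := by positivity
  obtain ⟨T, hT⟩ := eventually_atTop.1 <| (eventually_gt_atTop 0).and <|
    hf.abs.eventually (eventually_gt_nhds (half_lt_self (abs_pos.2 hL)))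
  refine not_integrableOn_Ioi_inv (a := max a T) ?_
  refine Integrable.mono' ((IntegrableOn.mono_set (hint.norm.const_mul (|L| / 2)⁻¹)
    (Ioi_subset_Ioi (le_max_left a T)))) measurable_inv.aestronglyMeasurable
    (ae_restrict_of_forall_mem measurableSet_Ioi fun t ht => ?_)
  obtain ⟨ht0, hft⟩ := hT t (le_max_right a T |>.trans ht.le)
  rw [norm_inv, Real.norm_of_nonneg ht0.le, norm_div, Real.norm_of_nonneg ht0.le,
    Real.norm_eq_abs]
  calc t⁻¹ = (|L| / 2)⁻¹ * (|L| / 2 / t) := by field_simp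
    _ ≤ (|L| / 2)⁻¹ * (|f t| / t) := by gcongr

theorem HasGradientAt.comp_hasDerivAt {H : Type*} [NormedAddCommGroup H]
    [InnerProductSpace ℝ H] [CompleteSpace H] {Φ : H → ℝ} {g : H} {x : ℝ → H} {v : H}
    {t : ℝ}
    (hΦ : HasGradientAt Φ g (x t)) (hx : HasDerivAt x v t) :
    HasDerivAt (fun s => Φ (x s)) ⟪g, v⟫_ℝ t := by
  have := (hasGradientAt_iff_hasFDerivAt.1 hΦ).comp_hasDerivAt t hx
  rw [InnerProductSpace.toDual_apply_apply] at this
  exact this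

section AVD

variable {H : Type*} [NormedAddCommGroup H] [InnerProductSpace ℝ H]
  {Φ : H → ℝ} {x : ℝ → H} {xstar : H} {α t : ℝ}

/-- The coefficient of `‖x - x⋆‖²` makes the `⟪x - x⋆, ẋ⟫` terms cancel in the derivative. -/
noncomputable def avdLyapunov (Φ : H → ℝ) (x : ℝ → H) (xstar : H) (α lam t : ℝ) : ℝ :=
  t ^ 2 * (Φ (x t) - Φ xstar) + ‖lam • (x t - xstar) + t • deriv x t‖ ^ 2 / 2
    + lam * (α - 1 - lam) / 2 * ‖x t - xstar‖ ^ 2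

noncomputable def avdEnergy (Φ : H → ℝ) (x : ℝ → H) (xstar : H) (t : ℝ) : ℝ :=
  Φ (x t) - Φ xstar + ‖deriv x t‖ ^ 2 / 2

theorem hasDerivAt_avdLyapunov [CompleteSpace H] (hΦ : Differentiable ℝ Φ)
    (hx : ContDiff ℝ 2 x) (lam : ℝ) (ht : t ≠ 0)
    (hode : deriv (deriv x) t + (α / t) • deriv x t + gradient Φ (x t) = 0) :
    HasDerivAt (avdLyapunov Φ x xstar α lam)
      (2 * t * (Φ (x t) - Φ xstar) - lam * t * ⟪gradient Φ (x t), x t - xstar⟫_ℝ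
        + (lam + 1 - α) * t * ‖deriv x t‖ ^ 2) t := by
  have hxt : HasDerivAt x (deriv x t) t := (hx.differentiable two_ne_zero t).hasDerivAt
  have hvt : HasDerivAt (deriv x) (deriv (deriv x) t) t :=
    (hx.differentiable_deriv_two t).hasDerivAt
  have hacc : deriv (deriv x) t = -((α / t) • deriv x t) - gradient Φ (x t) := by
    linear_combination (norm := module) hode
  have hΦx := (hΦ (x t)).hasGradientAt.comp_hasDerivAt hxt
  have hd := hxt.sub_const xstar
  have := (((hasDerivAt_pow 2 t).mul (hΦx.sub_const (Φ xstar))).add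
      (((hd.const_smul lam).add ((hasDerivAt_id t).smul hvt)).norm_sq.div_const 2)).add
    (hd.norm_sq.const_mul (lam * (α - 1 - lam) / 2))
  refine this.congr_deriv ?_
  rw [hacc]
  simp only [Pi.add_apply, Pi.smul_apply, Pi.smul_apply', id, inner_add_left, inner_add_right,
    inner_sub_left, inner_sub_right, inner_neg_right, real_inner_smul_left, real_inner_smul_right,
    real_inner_self_eq_norm_sq]
  rw [real_inner_comm (gradient Φ (x t)) (x t), real_inner_comm (gradient Φ (x t)) xstar,
    real_inner_comm (gradient Φ (x t)) (deriv x t)]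
  field_simp
  ring

theorem hasDerivAt_sq_mul_avdEnergy [CompleteSpace H] (hΦ : Differentiable ℝ Φ)
    (hx : ContDiff ℝ 2 x) (ht : t ≠ 0)
    (hode : deriv (deriv x) t + (α / t) • deriv x t + gradient Φ (x t) = 0) :
    HasDerivAt (fun s => s ^ 2 * avdEnergy Φ x xstar s)
      (2 * t * (Φ (x t) - Φ xstar) + (1 - α) * t * ‖deriv x t‖ ^ 2) t := by
  have hxt : HasDerivAt x (deriv x t) t := (hx.differentiable two_ne_zero t).hasDerivAt
  have hvt : HasDerivAt (deriv x) (deriv (deriv x) t) t :=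
    (hx.differentiable_deriv_two t).hasDerivAt
  have hacc : deriv (deriv x) t = -((α / t) • deriv x t) - gradient Φ (x t) := by
    linear_combination (norm := module) hode
  have hΦx := (hΦ (x t)).hasGradientAt.comp_hasDerivAt hxt
  have := (hasDerivAt_pow 2 t).mul ((hΦx.sub_const (Φ xstar)).add (hvt.norm_sq.div_const 2))
  refine this.congr_deriv ?_
  rw [hacc]
  simp only [Pi.add_apply, inner_sub_right, inner_neg_right, real_inner_smul_right,
    real_inner_self_eq_norm_sq, real_inner_comm (gradient Φ (x t)) (deriv x t)]
  field_simp
  ring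

theorem avdLyapunov_nonneg (hmin : ∀ y, Φ xstar ≤ Φ y) {lam : ℝ} (hlam : 0 ≤ lam)
    (hlam' : lam ≤ α - 1) (t : ℝ) : 0 ≤ avdLyapunov Φ x xstar α lam t := by
  have hθ := sub_nonneg.2 (hmin (x t))
  have hcoef : 0 ≤ lam * (α - 1 - lam) / 2 := by nlinarith
  unfold avdLyapunov
  positivity

theorem integrableOn_avd_dissipation [CompleteSpace H] {t₀ : ℝ}
    (hΦconv : ConvexOn ℝ univ Φ) (hΦ : Differentiable ℝ Φ) (hmin : ∀ y, Φ xstar ≤ Φ y)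
    (hα : 3 < α) (ht₀ : 0 < t₀) (hx : ContDiff ℝ 2 x)
    (hode : ∀ t, t₀ ≤ t → deriv (deriv x) t + (α / t) • deriv x t + gradient Φ (x t) = 0) :
    IntegrableOn (fun t => t * (Φ (x t) - Φ xstar + ‖deriv x t‖ ^ 2)) (Ioi t₀) := by
  have hc : 0 < (α - 3) / 2 := by linarith
  have hE' : ∀ t ∈ Ici t₀, HasDerivAt (avdLyapunov Φ x xstar α ((α + 1) / 2))
      (2 * t * (Φ (x t) - Φ xstar) - (α + 1) / 2 * t * ⟪gradient Φ (x t), x t - xstar⟫_ℝ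
        + ((α + 1) / 2 + 1 - α) * t * ‖deriv x t‖ ^ 2) t :=
    fun t ht => hasDerivAt_avdLyapunov hΦ hx _ (ht₀.trans_le ht).ne' (hode t ht)
  have hw : Continuous fun t => t * (Φ (x t) - Φ xstar + ‖deriv x t‖ ^ 2) := by
    have := hΦ.continuous; have := hx.continuous; have := hx.continuous_deriv one_le_two
    fun_prop
  have hdecay : ∀ t ∈ Ioi t₀,
      2 * t * (Φ (x t) - Φ xstar) - (α + 1) / 2 * t * ⟪gradient Φ (x t), x t - xstar⟫_ℝ
        + ((α + 1) / 2 + 1 - α) * t * ‖deriv x t‖ ^ 2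
      ≤ -((α - 3) / 2 * (t * (Φ (x t) - Φ xstar + ‖deriv x t‖ ^ 2))) := by
    intro t ht
    have hconv := hΦconv.add_apply_sub_le_of_hasFDerivAt (mem_univ _) (mem_univ xstar)
      (hΦ (x t)).hasFDerivAt
    rw [← inner_gradient_left, ← neg_sub, inner_neg_right] at hconv
    have hlamt : 0 ≤ (α + 1) / 2 * t := by have : (0:ℝ) < t := ht₀.trans ht; positivity
    linear_combination mul_le_mul_of_nonneg_left
      (by linarith : Φ (x t) - Φ xstar ≤ ⟪gradient Φ (x t), x t - xstar⟫_ℝ) hlamt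
  have := integrableOn_Ioi_of_hasDerivAt_le_neg
    (fun t ht => (hE' t ht).continuousAt.continuousWithinAt)
    (fun t ht => hE' t (mem_Ici_of_Ioi ht))
    (fun t _ => avdLyapunov_nonneg hmin (by linarith) (by linarith) t)
    (continuous_const.mul hw).continuousOn
    (fun t ht => mul_nonneg hc.le (mul_nonneg (ht₀.trans ht).le
      (add_nonneg (sub_nonneg.2 (hmin _)) (sq_nonneg _))))
    hdecay
  exact (integrable_const_mul_iff (isUnit_iff_ne_zero.2 hc.ne') _).1 this

theorem tendsto_sq_mul_avdEnergy [CompleteSpace H] {t₀ : ℝ}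
    (hΦ : Differentiable ℝ Φ) (hmin : ∀ y, Φ xstar ≤ Φ y) (ht₀ : 0 < t₀)
    (hx : ContDiff ℝ 2 x)
    (hode : ∀ t, t₀ ≤ t → deriv (deriv x) t + (α / t) • deriv x t + gradient Φ (x t) = 0)
    (hdiss : IntegrableOn (fun t => t * (Φ (x t) - Φ xstar + ‖deriv x t‖ ^ 2)) (Ioi t₀)) :
    Tendsto (fun t => t ^ 2 * avdEnergy Φ x xstar t) atTop (𝓝 0) := by
  have := hΦ.continuous; have := hx.continuous; have := hx.continuous_deriv one_le_two
  have hpos : ∀ t ∈ Ioi t₀, 0 < t := fun t ht => ht₀.trans ht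
  have hG' : ∀ t ∈ Ioi t₀, HasDerivAt (fun s => s ^ 2 * avdEnergy Φ x xstar s)
      (2 * t * (Φ (x t) - Φ xstar) + (1 - α) * t * ‖deriv x t‖ ^ 2) t :=
    fun t ht => hasDerivAt_sq_mul_avdEnergy hΦ hx (hpos t ht).ne' (hode t ht.out.le)
  have hG'int : IntegrableOn
      (fun t => 2 * t * (Φ (x t) - Φ xstar) + (1 - α) * t * ‖deriv x t‖ ^ 2) (Ioi t₀) := by
    refine Integrable.mono' (hdiss.const_mul (2 + |1 - α|)) (by fun_prop) <|
      ae_restrict_of_forall_mem measurableSet_Ioi fun t ht => ?_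
    have hθ := mul_nonneg (hpos t ht).le (sub_nonneg.2 (hmin (x t)))
    have hv := mul_nonneg (hpos t ht).le (sq_nonneg ‖deriv x t‖)
    rw [Real.norm_eq_abs, abs_le]
    constructor <;> nlinarith [mul_le_mul_of_nonneg_right (le_abs_self (1 - α)) hv,
      mul_le_mul_of_nonneg_right (neg_abs_le (1 - α)) hv, mul_nonneg (abs_nonneg (1 - α)) hθ]
  have hlim := tendsto_limUnder_of_hasDerivAt_of_integrableOn_Ioi hG' hG'int
  have hdiv : IntegrableOn (fun t => t ^ 2 * avdEnergy Φ x xstar t / t) (Ioi t₀) := by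
    refine Integrable.mono' hdiss
      (Measurable.aestronglyMeasurable (by unfold avdEnergy; fun_prop)) <|
      ae_restrict_of_forall_mem measurableSet_Ioi fun t ht => ?_
    have hθ := mul_nonneg (hpos t ht).le (sub_nonneg.2 (hmin (x t)))
    have hv := mul_nonneg (hpos t ht).le (sq_nonneg ‖deriv x t‖)
    rw [Real.norm_eq_abs, abs_le, avdEnergy]
    field_simp
    constructor <;> nlinarith
  rwa [hlim.eq_zero_of_integrableOn_div hdiv] at hlim

end AVD

/-- for `α > 3`, the values along any trajectory of `(AVD)_α`
satisfy `Φ(x(t)) - inf Φ = o(1/t²)`, i.e. `t² (Φ(x(t)) - inf Φ) → 0`. -/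
theorem stmt_7
    {H : Type*} [NormedAddCommGroup H] [InnerProductSpace ℝ H] [CompleteSpace H]
    (Φ : H → ℝ) (hΦconv : ConvexOn ℝ Set.univ Φ) (hΦC1 : ContDiff ℝ 1 Φ)
    (xstar : H) (hxstar : ∀ y : H, Φ xstar ≤ Φ y)
    (α t₀ : ℝ) (hα : 3 < α) (ht₀ : 0 < t₀)
    (x : ℝ → H) (hx : ContDiff ℝ 2 x)
    (hode : ∀ t : ℝ, t₀ ≤ t →
      deriv (deriv x) t + (α / t) • deriv x t + gradient Φ (x t) = 0) :
    Filter.Tendsto (fun t : ℝ => t ^ 2 * (Φ (x t) - Φ xstar))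
      Filter.atTop (nhds 0) := by
  have hΦ : Differentiable ℝ Φ := hΦC1.differentiable one_ne_zero
  have hdiss := integrableOn_avd_dissipation hΦconv hΦ hxstar hα ht₀ hx hode
  refine tendsto_of_tendsto_of_tendsto_of_le_of_le tendsto_const_nhds
    (tendsto_sq_mul_avdEnergy hΦ hxstar ht₀ hx hode hdiss) (fun t => ?_) (fun t => ?_)
  · exact mul_nonneg (sq_nonneg t) (sub_nonneg.2 (hxstar (x t)))
  · unfold avdEnergy
    gcongr
    exact le_add_of_nonneg_right (by positivity)
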